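/- Bounded client drift for 1-way Gradient Transfer (non-convex case, Lemma): in one round of 1-way Gradient Transfer, suppose F_f is β-smooth, the server learning rate satisfies η_s ≥ 1, and η̃ ≤ 1/(18β). Then the client drift satisfies ℰ ≤ (4η̃/(9 β η_s²)) ‖∇f(x)‖² + (2η̃²/η_s²) ((1/K) σ² + 4 σ_c²). -/

import Mathlib

/-!
Unrolling the local recursion gives `x_i^k - x = -η ∑_{l<k} (g_i^l + g_c)`. Each summand splits
into the martingale noise `g_i^l - ∇F_f(x_i^l)`, the smoothness error `∇F_f(x_i^l) - ∇F_f(x)`,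
the centralized noise `g_c - ∇F_c(x)` and the full gradient `∇f(x)`. Martingale differences are
orthogonal in `L²`, so the noise contributes only `k σ²`, and smoothness bounds the second part
by `β²` times the earlier drifts. The recursion
`ℰ_k ≤ 2η²kσ² + 6η²β²k ∑_{l<k} ℰ_l + 6η²k²(σ_c² + ‖∇f(x)‖²)` is summed over `k`; the step-size
condition makes the self-referential term at most `1/108` of the total.
-/

open MeasureTheory

/-- The σ-algebra generated by the centralized stochastic gradient `gc` together with all
client stochastic gradients `g j l` strictly preceding `g i k` in the lexicographic order
of the pairs `(k, i)` (step index first, then client index). -/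
noncomputable def mixedFLPast {Ω E : Type*} [MeasurableSpace Ω]
    [NormedAddCommGroup E] [InnerProductSpace ℝ E] [MeasurableSpace E]
    {S K : ℕ} (gc : Ω → E) (g : Fin S → Fin K → Ω → E) (i : Fin S) (k : Fin K) :
    MeasurableSpace Ω :=
  MeasurableSpace.comap gc inferInstance ⊔
    ⨆ (p : Fin S × Fin K)
      (_ : (p.2 : ℕ) < (k : ℕ) ∨ ((p.2 : ℕ) = (k : ℕ) ∧ (p.1 : ℕ) < (i : ℕ))),
      MeasurableSpace.comap (g p.1 p.2) inferInstance

open Finset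
open scoped RealInnerProductSpace NNReal ENNReal

section Orthogonality

variable {Ω E : Type*} [NormedAddCommGroup E] [InnerProductSpace ℝ E]
  {m m₀ : MeasurableSpace Ω} {μ : Measure Ω}

theorem MeasureTheory.MemLp.integrable_inner {f h : Ω → E} (hf : MemLp f 2 μ)
    (hh : MemLp h 2 μ) : Integrable (fun ω => ⟪f ω, h ω⟫) μ :=
  memLp_one_iff_integrable.1 ((innerSL ℝ).memLp_of_bilin 1 hf hh)

theorem integral_inner_eq_zero_of_condExp_eq_zero [CompleteSpace E] [IsFiniteMeasure μ]
    (hm : m ≤ m₀) {f h : Ω → E} (hf : StronglyMeasurable[m] f)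
    (hfh : Integrable (fun ω => ⟪f ω, h ω⟫) μ) (hh : Integrable h μ)
    (hcond : μ[h | m] =ᵐ[μ] 0) : ∫ ω, ⟪f ω, h ω⟫ ∂μ = 0 := by
  have hpull : μ[fun ω => ⟪f ω, h ω⟫ | m] =ᵐ[μ] fun ω => ⟪f ω, (μ[h | m]) ω⟫ :=
    condExp_bilin_of_stronglyMeasurable_left (innerSL ℝ) hf hfh hh
  rw [← integral_condExp hm, integral_eq_zero_of_ae]
  filter_upwards [hpull, hcond] with ω h₁ h₂
  simp [h₁, h₂]

theorem integral_norm_sum_sq_eq_sum_of_condExp_eq_zero [CompleteSpace E] [IsFiniteMeasure μ]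
    {ι : Type*} [LinearOrder ι] {ℱ : ι → MeasurableSpace Ω} (hℱ : ∀ j, ℱ j ≤ m₀)
    {ξ : ι → Ω → E} (hξ : ∀ j, MemLp (ξ j) 2 μ)
    (hadapted : ∀ l j, l < j → StronglyMeasurable[ℱ j] (ξ l))
    (hcond : ∀ j, μ[ξ j | ℱ j] =ᵐ[μ] 0) (s : Finset ι) :
    ∫ ω, ‖∑ l ∈ s, ξ l ω‖ ^ 2 ∂μ = ∑ l ∈ s, ∫ ω, ‖ξ l ω‖ ^ 2 ∂μ := by
  have hcross_lt : ∀ l j, l < j → ∫ ω, ⟪ξ l ω, ξ j ω⟫ ∂μ = 0 := fun l j hlj =>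
    integral_inner_eq_zero_of_condExp_eq_zero (hℱ j) (hadapted l j hlj)
      ((hξ l).integrable_inner (hξ j)) ((hξ j).integrable one_le_two) (hcond j)
  have hcross : ∀ l j, l ≠ j → ∫ ω, ⟪ξ l ω, ξ j ω⟫ ∂μ = 0 := by
    intro l j hlj
    rcases hlj.lt_or_gt with hlt | hgt
    · exact hcross_lt l j hlt
    · simpa only [real_inner_comm] using hcross_lt j l hgt
  have hexpand : ∀ ω, ‖∑ l ∈ s, ξ l ω‖ ^ 2 = ∑ l ∈ s, ∑ j ∈ s, ⟪ξ l ω, ξ j ω⟫ := fun ω => by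
    rw [← real_inner_self_eq_norm_sq, sum_inner]
    simp_rw [inner_sum]
  simp_rw [hexpand]
  rw [integral_finsetSum _ fun l _ => integrable_finsetSum _ fun j _ =>
    (hξ l).integrable_inner (hξ j)]
  refine sum_congr rfl fun l hl => ?_
  rw [integral_finsetSum _ fun j _ => (hξ l).integrable_inner (hξ j),
    sum_eq_single_of_mem l hl fun j _ hjl => hcross l j hjl.symm]
  simp_rw [real_inner_self_eq_norm_sq]

end Orthogonality

theorem MeasureTheory.MemLp.integrable_norm_sq {Ω E : Type*} [MeasurableSpace Ω]
    {μ : Measure Ω} [NormedAddCommGroup E] {f : Ω → E} (hf : MemLp f 2 μ) :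
    Integrable (fun ω => ‖f ω‖ ^ 2) μ :=
  (memLp_two_iff_integrable_sq_norm hf.1).1 hf

theorem LipschitzWith.memLp_comp {Ω E F : Type*} [MeasurableSpace Ω] {μ : Measure Ω}
    [IsFiniteMeasure μ] [NormedAddCommGroup E] [NormedAddCommGroup F] {p : ℝ≥0∞} {L : ℝ≥0}
    {φ : E → F} (hφ : LipschitzWith L φ) {Y : Ω → E} (hY : MemLp Y p μ) :
    MemLp (fun ω => φ (Y ω)) p μ :=
  (((hφ.sub (LipschitzWith.const (φ 0))).comp_memLp (by simp) hY).add
    (memLp_const (φ 0))).ae_eq (ae_of_all _ fun ω => by simp)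

theorem integral_le_of_condExp_le {Ω : Type*} {m m₀ : MeasurableSpace Ω} {μ : Measure Ω}
    [IsProbabilityMeasure μ] (hm : m ≤ m₀) {f : Ω → ℝ} {c : ℝ}
    (hf : ∀ᵐ ω ∂μ, μ[f | m] ω ≤ c) : ∫ ω, f ω ∂μ ≤ c := by
  rw [← integral_condExp hm]
  simpa using integral_mono_ae integrable_condExp (integrable_const c) hf

theorem condExp_sub_ae_eq_zero {Ω E : Type*} [NormedAddCommGroup E] [NormedSpace ℝ E]
    [CompleteSpace E] {m m₀ : MeasurableSpace Ω} {μ : Measure Ω} [IsFiniteMeasure μ]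
    (hm : m ≤ m₀) {f Y : Ω → E} (hf : Integrable f μ) (hY : StronglyMeasurable[m] Y)
    (hYi : Integrable Y μ) (hfY : μ[f | m] =ᵐ[μ] Y) : μ[f - Y | m] =ᵐ[μ] 0 := by
  filter_upwards [condExp_sub hf hYi m, hfY] with ω h₁ h₂
  rw [h₁, Pi.sub_apply, h₂, condExp_of_stronglyMeasurable hm hY hYi, sub_self, Pi.zero_apply]

theorem norm_sum_sq_le_card_mul {ι E : Type*} [SeminormedAddCommGroup E] (s : Finset ι)
    (f : ι → E) : ‖∑ i ∈ s, f i‖ ^ 2 ≤ #s * ∑ i ∈ s, ‖f i‖ ^ 2 :=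
  (pow_le_pow_left₀ (norm_nonneg _) (norm_sum_le s f) 2).trans sq_sum_le_card_mul_sum_sq

theorem norm_add_add_add_sq_le {E : Type*} [SeminormedAddCommGroup E] (a b c d : E) :
    ‖a + (b + c + d)‖ ^ 2 ≤ 2 * ‖a‖ ^ 2 + 6 * ‖b‖ ^ 2 + 6 * ‖c‖ ^ 2 + 6 * ‖d‖ ^ 2 := by
  have h₂ : ‖a + (b + c + d)‖ ^ 2 ≤ 2 * ‖a‖ ^ 2 + 2 * ‖b + c + d‖ ^ 2 := by
    nlinarith [norm_add_le a (b + c + d), norm_nonneg (a + (b + c + d)),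
      sq_nonneg (‖a‖ - ‖b + c + d‖)]
  have h₃ : ‖b + c + d‖ ^ 2 ≤ 3 * ‖b‖ ^ 2 + 3 * ‖c‖ ^ 2 + 3 * ‖d‖ ^ 2 := by
    nlinarith [norm_add₃_le (a := b) (b := c) (c := d), norm_nonneg (b + c + d),
      sq_nonneg (‖b‖ - ‖c‖), sq_nonneg (‖b‖ - ‖d‖), sq_nonneg (‖c‖ - ‖d‖)]
  linarith

theorem sum_fin_val_le (K : ℕ) : ∑ k : Fin K, (k : ℝ) ≤ (K : ℝ) ^ 2 / 2 := by
  have h : (∑ i ∈ range K, i) * 2 ≤ K * K := by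
    rw [sum_range_id_mul_two]
    exact Nat.mul_le_mul_left _ (Nat.sub_le _ _)
  have h' : ((∑ i ∈ range K, i : ℕ) : ℝ) * 2 ≤ K * K := by exact_mod_cast h
  rw [Fin.sum_univ_eq_sum_range (fun i => (i : ℝ)) K]
  push_cast at h'
  linarith

theorem sum_fin_val_sq_le (K : ℕ) : ∑ k : Fin K, (k : ℝ) ^ 2 ≤ (K : ℝ) ^ 3 := by
  calc ∑ k : Fin K, (k : ℝ) ^ 2 ≤ ∑ _k : Fin K, (K : ℝ) ^ 2 :=
        sum_le_sum fun k _ => pow_le_pow_left₀ k.val.cast_nonneg (by exact_mod_cast k.isLt.le) 2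
    _ = (K : ℝ) ^ 3 := by simp; ring

theorem one_sub_mul_sum_le_of_le_partial_sum {K : ℕ} {A : Fin K → ℝ} (hA : ∀ k, 0 ≤ A k)
    {a b c : ℝ} (ha : 0 ≤ a) (hb : 0 ≤ b) (hc : 0 ≤ c)
    (h : ∀ k, A k ≤ a * k + b * k * ∑ l ∈ Iio k, A l + c * (k : ℝ) ^ 2) :
    (1 - b * (K : ℝ) ^ 2 / 2) * ∑ k, A k ≤ a * (K : ℝ) ^ 2 / 2 + c * (K : ℝ) ^ 3 := by
  set D := ∑ k, A k
  have hD₀ : 0 ≤ D := sum_nonneg fun k _ => hA k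
  have hpartial : ∀ k, ∑ l ∈ Iio k, A l ≤ D := fun k =>
    sum_le_sum_of_subset_of_nonneg (subset_univ _) fun l _ _ => hA l
  have hD : D ≤ ∑ k : Fin K, ((a + b * D) * k + c * (k : ℝ) ^ 2) :=
    sum_le_sum fun k _ => (h k).trans <| by
      nlinarith [mul_le_mul_of_nonneg_left (hpartial k) (mul_nonneg hb k.val.cast_nonneg)]
  rw [sum_add_distrib, ← mul_sum, ← mul_sum] at hD
  nlinarith [mul_le_mul_of_nonneg_left (sum_fin_val_le K) (add_nonneg ha (mul_nonneg hb hD₀)),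
    mul_le_mul_of_nonneg_left (sum_fin_val_sq_le K) hc]

section LocalIterates

variable {Ω E : Type*} [NormedAddCommGroup E] [NormedSpace ℝ E] {K : ℕ} {x : E} {η : ℝ}
  {gc : Ω → E} {G : Fin K → Ω → E} {X : ℕ → Ω → E}

theorem localIterate_eq_sub_sum (hX0 : X 0 = fun _ => x)
    (hXstep : ∀ k : Fin K, X (k + 1) = fun ω => X k ω - η • (G k ω + gc ω)) (k : Fin K)
    (ω : Ω) : X k ω = x - η • ∑ l ∈ Iio k, (G l ω + gc ω) := by
  obtain ⟨n, hn⟩ := k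
  induction n with
  | zero =>
    have hempty : Iio (⟨0, hn⟩ : Fin K) = ∅ := by ext l; simp [Fin.lt_def]
    simp [hX0, hempty]
  | succ n ih =>
    have hinsert : Iio (⟨n + 1, hn⟩ : Fin K) = insert ⟨n, by omega⟩ (Iio ⟨n, by omega⟩) := by
      ext l; simp only [mem_Iio, mem_insert, Fin.lt_def, Fin.ext_iff]; omega
    have hstep := congrFun (hXstep ⟨n, by omega⟩) ω
    dsimp only at hstep
    rw [hstep, ih (by omega), hinsert, sum_insert (by simp)]
    simp only [smul_add]
    abel

theorem measurable_localIterate [MeasurableSpace E] [BorelSpace E] [SecondCountableTopology E]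
    {m : MeasurableSpace Ω} (hX : ∀ (k : Fin K) ω, X k ω = x - η • ∑ l ∈ Iio k, (G l ω + gc ω))
    {k : Fin K} (hgc : Measurable[m] gc) (hG : ∀ l < k, Measurable[m] (G l)) :
    Measurable[m] (X k) := by
  simp_rw [funext (hX k)]
  exact measurable_const.sub
    ((Finset.measurable_sum _ fun l hl => (hG l (mem_Iio.1 hl)).add hgc).const_smul η)

theorem memLp_localIterate [MeasurableSpace Ω] {μ : Measure Ω} [IsFiniteMeasure μ] {p : ℝ≥0∞}
    (hX : ∀ (k : Fin K) ω, X k ω = x - η • ∑ l ∈ Iio k, (G l ω + gc ω))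
    (hgc : MemLp gc p μ) (hG : ∀ l, MemLp (G l) p μ) (k : Fin K) : MemLp (X k) p μ := by
  simp_rw [funext (hX k)]
  exact (memLp_const x).sub ((memLp_finsetSum _ fun l _ => (hG l).add hgc).const_smul η)

theorem norm_localIterate_sub_sq_le
    (hX : ∀ (k : Fin K) ω, X k ω = x - η • ∑ l ∈ Iio k, (G l ω + gc ω))
    {φ : E → E} {L : ℝ≥0} (hφ : LipschitzWith L φ) (c₀ : E) (k : Fin K) (ω : Ω) :
    ‖X k ω - x‖ ^ 2 ≤ η ^ 2 * (2 * ‖∑ l ∈ Iio k, (G l ω - φ (X l ω))‖ ^ 2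
      + 6 * (k * L ^ 2 * ∑ l ∈ Iio k, ‖X l ω - x‖ ^ 2)
      + 6 * ((k : ℝ) ^ 2 * ‖gc ω - c₀‖ ^ 2) + 6 * ((k : ℝ) ^ 2 * ‖φ x + c₀‖ ^ 2)) := by
  have hcard : (#(Iio k) : ℝ) = k := by simp
  have hsplit : X k ω - x = (-η) • (∑ l ∈ Iio k, (G l ω - φ (X l ω))
      + (∑ l ∈ Iio k, (φ (X l ω) - φ x) + (k : ℝ) • (gc ω - c₀) + (k : ℝ) • (φ x + c₀))) := by
    have hterm : ∀ l, G l ω + gc ω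
        = (G l ω - φ (X l ω)) + (φ (X l ω) - φ x) + ((gc ω - c₀) + (φ x + c₀)) := by
      intro l; abel
    simp_rw [hX k ω, hterm, sum_add_distrib, sum_const, ← Nat.cast_smul_eq_nsmul ℝ, hcard]
    module
  have hsmooth : ‖∑ l ∈ Iio k, (φ (X l ω) - φ x)‖ ^ 2
      ≤ k * L ^ 2 * ∑ l ∈ Iio k, ‖X l ω - x‖ ^ 2 := by
    refine (norm_sum_sq_le_card_mul _ _).trans ?_
    rw [hcard, mul_assoc, mul_sum _ _ ((L : ℝ) ^ 2)]
    gcongr with l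
    rw [← mul_pow]
    exact pow_le_pow_left₀ (norm_nonneg _) (hφ.norm_sub_le _ _) 2
  rw [hsplit, norm_smul, mul_pow, norm_neg, Real.norm_eq_abs, sq_abs]
  gcongr
  refine (norm_add_add_add_sq_le _ _ _ _).trans ?_
  rw [norm_smul, norm_smul, mul_pow, mul_pow, Real.norm_eq_abs, sq_abs]
  gcongr

end LocalIterates

section LocalDrift

variable {Ω E : Type*} [NormedAddCommGroup E] [InnerProductSpace ℝ E] {K : ℕ} {x : E} {η : ℝ}
  {gc : Ω → E} {G : Fin K → Ω → E} {X : ℕ → Ω → E}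
  [MeasurableSpace Ω] {μ : Measure Ω} [IsProbabilityMeasure μ] {φ : E → E} {L : ℝ≥0}

theorem integral_norm_localIterate_sub_sq_le
    (hX : ∀ (k : Fin K) ω, X k ω = x - η • ∑ l ∈ Iio k, (G l ω + gc ω))
    (hφ : LipschitzWith L φ) (hgc : MemLp gc 2 μ) (hG : ∀ l, MemLp (G l) 2 μ)
    {c₀ : E} {σ σc : ℝ} (hgc_var : ∫ ω, ‖gc ω - c₀‖ ^ 2 ∂μ ≤ σc ^ 2) (k : Fin K)
    (hnoise : ∫ ω, ‖∑ l ∈ Iio k, (G l ω - φ (X l ω))‖ ^ 2 ∂μ ≤ k * σ ^ 2) :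
    ∫ ω, ‖X k ω - x‖ ^ 2 ∂μ ≤ 2 * η ^ 2 * σ ^ 2 * k
      + 6 * η ^ 2 * L ^ 2 * k * ∑ l ∈ Iio k, ∫ ω, ‖X l ω - x‖ ^ 2 ∂μ
      + 6 * η ^ 2 * (σc ^ 2 + ‖φ x + c₀‖ ^ 2) * (k : ℝ) ^ 2 := by
  set ξ : Ω → E := fun ω => ∑ l ∈ Iio k, (G l ω - φ (X l ω))
  have hXm : ∀ l : Fin K, MemLp (X l) 2 μ := memLp_localIterate hX hgc hG
  have hξ : MemLp ξ 2 μ := memLp_finsetSum _ fun l _ => (hG l).sub (hφ.memLp_comp (hXm l))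
  have i₁ : Integrable (fun ω => 2 * ‖ξ ω‖ ^ 2) μ := hξ.integrable_norm_sq.const_mul 2
  have hXx : ∀ l : Fin K, Integrable (fun ω => ‖X l ω - x‖ ^ 2) μ := fun l =>
    ((hXm l).sub (memLp_const x)).integrable_norm_sq
  have i₂ : Integrable (fun ω => 6 * (k * L ^ 2 * ∑ l ∈ Iio k, ‖X l ω - x‖ ^ 2)) μ :=
    ((integrable_finsetSum _ fun l _ => hXx l).const_mul _).const_mul 6
  have i₃ : Integrable (fun ω => 6 * ((k : ℝ) ^ 2 * ‖gc ω - c₀‖ ^ 2)) μ :=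
    ((hgc.sub (memLp_const c₀)).integrable_norm_sq.const_mul _).const_mul 6
  have i₁₂ : Integrable (fun ω => 2 * ‖ξ ω‖ ^ 2
      + 6 * (k * L ^ 2 * ∑ l ∈ Iio k, ‖X l ω - x‖ ^ 2)) μ := i₁.add i₂
  have i₁₂₃ : Integrable (fun ω => 2 * ‖ξ ω‖ ^ 2
      + 6 * (k * L ^ 2 * ∑ l ∈ Iio k, ‖X l ω - x‖ ^ 2)
      + 6 * ((k : ℝ) ^ 2 * ‖gc ω - c₀‖ ^ 2)) μ := i₁₂.add i₃
  calc ∫ ω, ‖X k ω - x‖ ^ 2 ∂μ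
      ≤ ∫ ω, η ^ 2 * (2 * ‖ξ ω‖ ^ 2 + 6 * (k * L ^ 2 * ∑ l ∈ Iio k, ‖X l ω - x‖ ^ 2)
          + 6 * ((k : ℝ) ^ 2 * ‖gc ω - c₀‖ ^ 2) + 6 * ((k : ℝ) ^ 2 * ‖φ x + c₀‖ ^ 2)) ∂μ :=
        integral_mono_of_nonneg (ae_of_all _ fun ω => by positivity)
          ((i₁₂₃.add (integrable_const _)).const_mul _)
          (ae_of_all _ (norm_localIterate_sub_sq_le hX hφ c₀ k))
    _ = η ^ 2 * (2 * ∫ ω, ‖ξ ω‖ ^ 2 ∂μ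
          + 6 * (k * L ^ 2 * ∑ l ∈ Iio k, ∫ ω, ‖X l ω - x‖ ^ 2 ∂μ)
          + 6 * ((k : ℝ) ^ 2 * ∫ ω, ‖gc ω - c₀‖ ^ 2 ∂μ)
          + 6 * ((k : ℝ) ^ 2 * ‖φ x + c₀‖ ^ 2)) := by
        rw [integral_const_mul, integral_add i₁₂₃ (integrable_const _),
          integral_add i₁₂ i₃, integral_add i₁ i₂, integral_const_mul, integral_const_mul,
          integral_const_mul, integral_const_mul, integral_const_mul,
          integral_finsetSum _ fun l _ => hXx l, integral_const, probReal_univ, one_smul]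
    _ ≤ η ^ 2 * (2 * (k * σ ^ 2)
          + 6 * (k * L ^ 2 * ∑ l ∈ Iio k, ∫ ω, ‖X l ω - x‖ ^ 2 ∂μ)
          + 6 * ((k : ℝ) ^ 2 * σc ^ 2) + 6 * ((k : ℝ) ^ 2 * ‖φ x + c₀‖ ^ 2)) := by
        gcongr
    _ = _ := by ring

theorem one_sub_mul_sum_integral_norm_localIterate_sub_sq_le
    [CompleteSpace E] [MeasurableSpace E] [BorelSpace E] [SecondCountableTopology E]
    (hX : ∀ (k : Fin K) ω, X k ω = x - η • ∑ l ∈ Iio k, (G l ω + gc ω))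
    (hφ : LipschitzWith L φ) (hgc : MemLp gc 2 μ) (hG : ∀ l, MemLp (G l) 2 μ)
    {ℱ : Fin K → MeasurableSpace Ω} (hℱ : ∀ k, ℱ k ≤ ‹MeasurableSpace Ω›)
    (hgcℱ : ∀ k, Measurable[ℱ k] gc) (hGℱ : ∀ l k, l < k → Measurable[ℱ k] (G l))
    (hmean : ∀ k, μ[G k | ℱ k] =ᵐ[μ] fun ω => φ (X k ω)) {σ σc : ℝ}
    (hvar : ∀ k, ∀ᵐ ω ∂μ, μ[fun ω' => ‖G k ω' - φ (X k ω')‖ ^ 2 | ℱ k] ω ≤ σ ^ 2)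
    {c₀ : E} (hgc_var : ∫ ω, ‖gc ω - c₀‖ ^ 2 ∂μ ≤ σc ^ 2) :
    (1 - 3 * η ^ 2 * L ^ 2 * K ^ 2) * ∑ k : Fin K, ∫ ω, ‖X k ω - x‖ ^ 2 ∂μ
      ≤ η ^ 2 * σ ^ 2 * K ^ 2 + 6 * η ^ 2 * (σc ^ 2 + ‖φ x + c₀‖ ^ 2) * K ^ 3 := by
  have hXm : ∀ l : Fin K, MemLp (X l) 2 μ := memLp_localIterate hX hgc hG
  have hφXℱ : ∀ l k, l ≤ k → Measurable[ℱ k] fun ω => φ (X l ω) := fun l k hlk =>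
    hφ.continuous.measurable.comp
      (measurable_localIterate hX (hgcℱ k) fun j hj => hGℱ j k (hj.trans_le hlk))
  set ξ : Fin K → Ω → E := fun l ω => G l ω - φ (X l ω)
  have hξ : ∀ l, MemLp (ξ l) 2 μ := fun l => (hG l).sub (hφ.memLp_comp (hXm l))
  have hadapted : ∀ l k, l < k → StronglyMeasurable[ℱ k] (ξ l) := fun l k hlk =>
    ((hGℱ l k hlk).sub (hφXℱ l k hlk.le)).stronglyMeasurable
  have hcond : ∀ k, μ[ξ k | ℱ k] =ᵐ[μ] 0 := fun k =>
    condExp_sub_ae_eq_zero (hℱ k) ((hG k).integrable one_le_two)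
      (hφXℱ k k le_rfl).stronglyMeasurable ((hφ.memLp_comp (hXm k)).integrable one_le_two)
      (hmean k)
  have hnoise : ∀ k : Fin K, ∫ ω, ‖∑ l ∈ Iio k, ξ l ω‖ ^ 2 ∂μ ≤ k * σ ^ 2 := fun k => by
    rw [integral_norm_sum_sq_eq_sum_of_condExp_eq_zero hℱ hξ hadapted hcond]
    calc ∑ l ∈ Iio k, ∫ ω, ‖ξ l ω‖ ^ 2 ∂μ ≤ ∑ _l ∈ Iio k, σ ^ 2 :=
          sum_le_sum fun l _ => integral_le_of_condExp_le (hℱ l) (hvar l)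
      _ = k * σ ^ 2 := by simp
  have hsum := one_sub_mul_sum_le_of_le_partial_sum
    (fun k => integral_nonneg fun ω => sq_nonneg ‖X k ω - x‖) (by positivity) (by positivity)
    (by positivity) fun k =>
      integral_norm_localIterate_sub_sq_le hX hφ hgc hG hgc_var k (hnoise k)
  linarith

end LocalDrift

theorem le_mul_drift_bound_of_one_sub_mul_le {K η ηs ηt β σ σc N D : ℝ} (hK : 0 < K)
    (hη : 0 < η) (hηs : 1 ≤ ηs) (hβ : 0 < β) (hN : 0 ≤ N) (hηt : ηt = K * ηs * η)
    (hstep : ηt ≤ 1 / (18 * β))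
    (hD : (1 - 3 * η ^ 2 * β ^ 2 * K ^ 2) * D
      ≤ η ^ 2 * σ ^ 2 * K ^ 2 + 6 * η ^ 2 * (σc ^ 2 + N) * K ^ 3) :
    D ≤ K * ((4 * ηt / (9 * β * ηs ^ 2)) * N
      + (2 * ηt ^ 2 / ηs ^ 2) * ((1 / K) * σ ^ 2 + 4 * σc ^ 2)) := by
  subst hηt
  have hu : η * K * β * ηs ≤ 1 / 18 := by
    rw [le_div_iff₀ (by positivity)] at hstep
    linarith
  have hq : 3 * η ^ 2 * β ^ 2 * K ^ 2 ≤ 1 / 108 := by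
    have : η * K * β ≤ 1 / 18 := by nlinarith [mul_pos (mul_pos hη hK) hβ]
    nlinarith [mul_pos (mul_pos hη hK) hβ]
  have hD' : D ≤ 108 / 107 * (η ^ 2 * σ ^ 2 * K ^ 2 + 6 * η ^ 2 * (σc ^ 2 + N) * K ^ 3) := by
    rcases le_or_gt D 0 with hD0 | hD0
    · exact hD0.trans (by positivity)
    · nlinarith
  have hexpand : K * ((4 * (K * ηs * η) / (9 * β * ηs ^ 2)) * N
      + (2 * (K * ηs * η) ^ 2 / ηs ^ 2) * ((1 / K) * σ ^ 2 + 4 * σc ^ 2))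
      = 4 * K ^ 2 * η * N / (9 * β * ηs) + 2 * K ^ 2 * η ^ 2 * σ ^ 2
        + 8 * K ^ 3 * η ^ 2 * σc ^ 2 := by
    field_simp
    ring
  have hNterm : 648 / 107 * η ^ 2 * K ^ 3 * N ≤ 4 * K ^ 2 * η * N / (9 * β * ηs) := by
    rw [le_div_iff₀ (by positivity)]
    have : 0 ≤ η * K ^ 2 * N := by positivity
    nlinarith
  rw [hexpand]
  nlinarith [mul_nonneg (mul_nonneg (sq_nonneg η) (sq_nonneg σ)) (sq_nonneg K),
    mul_nonneg (mul_nonneg (sq_nonneg η) (sq_nonneg σc)) (pow_pos hK 3).le]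

section MixedFLPast

variable {Ω E : Type*} [MeasurableSpace Ω] [NormedAddCommGroup E] [InnerProductSpace ℝ E]
  [MeasurableSpace E] {S K : ℕ} {gc : Ω → E} {g : Fin S → Fin K → Ω → E}

theorem mixedFLPast_le (hgc : Measurable gc) (hg : ∀ i k, Measurable (g i k)) (i : Fin S)
    (k : Fin K) : mixedFLPast gc g i k ≤ ‹MeasurableSpace Ω› :=
  sup_le hgc.comap_le (iSup₂_le fun p _ => (hg p.1 p.2).comap_le)

theorem measurable_centralized_mixedFLPast (i : Fin S) (k : Fin K) :
    Measurable[mixedFLPast gc g i k] gc :=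
  measurable_iff_comap_le.2 le_sup_left

theorem measurable_client_mixedFLPast_of_lt (i : Fin S) {l k : Fin K} (hlk : l < k) :
    Measurable[mixedFLPast gc g i k] (g i l) :=
  measurable_iff_comap_le.2 <| le_sup_of_le_right <|
    le_iSup₂_of_le (f := fun (p : Fin S × Fin K)
      (_ : (p.2 : ℕ) < (k : ℕ) ∨ ((p.2 : ℕ) = (k : ℕ) ∧ (p.1 : ℕ) < (i : ℕ))) =>
      MeasurableSpace.comap (g p.1 p.2) inferInstance) (i, l) (Or.inl hlk) le_rfl

end MixedFLPast

theorem owgt_bounded_drift_nonconvex_general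
    {E : Type*} [NormedAddCommGroup E] [InnerProductSpace ℝ E] [FiniteDimensional ℝ E]
    [MeasurableSpace E] [BorelSpace E]
    {Ω : Type*} [MeasurableSpace Ω] (μ : Measure Ω) [IsProbabilityMeasure μ]
    -- current model, local steps, cohort size, learning rates, effective step size
    (x : E) (K S : ℕ) (hK : 1 ≤ K) (hS : 1 ≤ S)
    (η ηs ηt : ℝ) (hη : 0 < η) (hηt : ηt = (K : ℝ) * ηs * η)
    -- federated and centralized losses
    (Ff Fc : E → ℝ) (hFf_diff : Differentiable ℝ Ff) (hFc_diff : Differentiable ℝ Fc)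
    (β σ σc : ℝ) (hβ : 0 < β)
    -- centralized stochastic gradient: mean ∇F_c(x), variance at most σc²
    (gc : Ω → E) (hgc_meas : Measurable gc) (hgc_L2 : MemLp gc 2 μ)
    (hgc_var : ∫ ω, ‖gc ω - gradient Fc x‖ ^ 2 ∂μ ≤ σc ^ 2)
    -- client stochastic gradients
    (g : Fin S → Fin K → Ω → E)
    (hg_meas : ∀ i k, Measurable (g i k)) (hg_L2 : ∀ i k, MemLp (g i k) 2 μ)
    -- local iterates: x_i^0 = x and x_i^{k+1} = x_i^k − η (g_i^{k+1} + g_c)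
    (X : Fin S → ℕ → Ω → E)
    (hX0 : ∀ i, X i 0 = fun _ => x)
    (hXstep : ∀ i (k : Fin K),
      X i ((k : ℕ) + 1) = fun ω => X i (k : ℕ) ω - η • (g i k ω + gc ω))
    -- conditionally on the past, g i k has mean ∇F_f(x_i^k) and variance at most σ²
    (hg_condmean : ∀ i k,
      μ[g i k | mixedFLPast gc g i k] =ᵐ[μ] fun ω => gradient Ff (X i (k : ℕ) ω))
    (hg_condvar : ∀ i k, ∀ᵐ ω ∂μ,
      (μ[(fun ω' => ‖g i k ω' - gradient Ff (X i (k : ℕ) ω')‖ ^ 2) |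
          mixedFLPast gc g i k]) ω ≤ σ ^ 2)
    -- client drift
    (drift : ℝ)
    (hdrift : drift = (1 / ((K : ℝ) * (S : ℝ))) *
      ∑ i : Fin S, ∑ k : Fin K, ∫ ω, ‖X i (k : ℕ) ω - x‖ ^ 2 ∂μ)
    -- smoothness of the federated loss
    (hFf_smooth : ∀ y z : E, ‖gradient Ff y - gradient Ff z‖ ≤ β * ‖y - z‖)
    -- server learning rate and effective step size bounds
    (hηs1 : 1 ≤ ηs) (hstep : ηt ≤ 1 / (18 * β)) :
    drift
      ≤ (4 * ηt / (9 * β * ηs ^ 2)) * ‖gradient (fun y => Ff y + Fc y) x‖ ^ 2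
        + (2 * ηt ^ 2 / ηs ^ 2) * ((1 / (K : ℝ)) * σ ^ 2 + 4 * σc ^ 2) := by
  have hK₀ : (0 : ℝ) < K := by exact_mod_cast hK
  have hS₀ : (0 : ℝ) < S := by exact_mod_cast hS
  have hgrad : gradient (fun y => Ff y + Fc y) x = gradient Ff x + gradient Fc x := by
    simp only [gradient, fderiv_fun_add (hFf_diff x) (hFc_diff x), map_add]
  have hβL : ((Real.toNNReal β : ℝ≥0) : ℝ) = β := Real.coe_toNNReal β hβ.le
  have hφ : LipschitzWith (Real.toNNReal β) (gradient Ff) :=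
    LipschitzWith.of_dist_le_mul fun y z => by
      simpa only [dist_eq_norm, hβL] using hFf_smooth y z
  rw [hdrift, hgrad]
  set R := (4 * ηt / (9 * β * ηs ^ 2)) * ‖gradient Ff x + gradient Fc x‖ ^ 2
    + (2 * ηt ^ 2 / ηs ^ 2) * ((1 / (K : ℝ)) * σ ^ 2 + 4 * σc ^ 2)
  have hclient : ∀ i, ∑ k : Fin K, ∫ ω, ‖X i k ω - x‖ ^ 2 ∂μ ≤ K * R := fun i => by
    have h := one_sub_mul_sum_integral_norm_localIterate_sub_sq_le
      (localIterate_eq_sub_sum (hX0 i) (hXstep i)) hφ hgc_L2 (hg_L2 i)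
      (mixedFLPast_le hgc_meas hg_meas i) (measurable_centralized_mixedFLPast i)
      (fun _ _ => measurable_client_mixedFLPast_of_lt i) (hg_condmean i) (hg_condvar i) hgc_var
    rw [hβL] at h
    exact le_mul_drift_bound_of_one_sub_mul_le hK₀ hη hηs1 hβ (sq_nonneg _) hηt hstep h
  calc 1 / ((K : ℝ) * S) * ∑ i : Fin S, ∑ k : Fin K, ∫ ω, ‖X i k ω - x‖ ^ 2 ∂μ
      ≤ 1 / ((K : ℝ) * S) * ∑ _i : Fin S, K * R := by
        gcongr with i
        exact hclient i
    _ = R := by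
        rw [sum_const, card_univ, Fintype.card_fin, nsmul_eq_mul]
        field_simp

/-- Bounded client drift for 1-way Gradient Transfer (non-convex case, Lemma): if `F_f`
is `β`-smooth, `η_s ≥ 1` and `η̃ ≤ 1/(18β)`, then
`ℰ ≤ (4η̃/(9βη_s²))‖∇f(x)‖² + (2η̃²/η_s²)((1/K)σ² + 4σc²)`. -/
theorem owgt_bounded_drift_nonconvex
    {E : Type*} [NormedAddCommGroup E] [InnerProductSpace ℝ E] [FiniteDimensional ℝ E]
    [MeasurableSpace E] [BorelSpace E]
    {Ω : Type*} [MeasurableSpace Ω] (μ : Measure Ω) [IsProbabilityMeasure μ]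
    -- current model, local steps, cohort size, learning rates, effective step size
    (x : E) (K S : ℕ) (hK : 1 ≤ K) (hS : 1 ≤ S)
    (η ηs ηt : ℝ) (hη : 0 < η) (hηs : 0 < ηs) (hηt : ηt = (K : ℝ) * ηs * η)
    -- federated and centralized losses
    (Ff Fc : E → ℝ) (hFf_diff : Differentiable ℝ Ff) (hFc_diff : Differentiable ℝ Fc)
    (β σ σc : ℝ) (hβ : 0 < β)
    -- centralized stochastic gradient: mean ∇F_c(x), variance at most σc²
    (gc : Ω → E) (hgc_meas : Measurable gc) (hgc_L2 : MemLp gc 2 μ)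
    (hgc_mean : ∫ ω, gc ω ∂μ = gradient Fc x)
    (hgc_var : ∫ ω, ‖gc ω - gradient Fc x‖ ^ 2 ∂μ ≤ σc ^ 2)
    -- client stochastic gradients
    (g : Fin S → Fin K → Ω → E)
    (hg_meas : ∀ i k, Measurable (g i k)) (hg_L2 : ∀ i k, MemLp (g i k) 2 μ)
    -- local iterates: x_i^0 = x and x_i^{k+1} = x_i^k − η (g_i^{k+1} + g_c)
    (X : Fin S → ℕ → Ω → E)
    (hX0 : ∀ i, X i 0 = fun _ => x)
    (hXstep : ∀ i (k : Fin K),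
      X i ((k : ℕ) + 1) = fun ω => X i (k : ℕ) ω - η • (g i k ω + gc ω))
    -- conditionally on the past, g i k has mean ∇F_f(x_i^k) and variance at most σ²
    (hg_condmean : ∀ i k,
      μ[g i k | mixedFLPast gc g i k] =ᵐ[μ] fun ω => gradient Ff (X i (k : ℕ) ω))
    (hg_condvar : ∀ i k, ∀ᵐ ω ∂μ,
      (μ[(fun ω' => ‖g i k ω' - gradient Ff (X i (k : ℕ) ω')‖ ^ 2) |
          mixedFLPast gc g i k]) ω ≤ σ ^ 2)
    -- server update
    (xplus : Ω → E)
    (hxplus : xplus = fun ω =>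
      x - (ηt / ((K : ℝ) * (S : ℝ))) • ∑ i : Fin S, ∑ k : Fin K, (g i k ω + gc ω))
    -- client drift
    (drift : ℝ)
    (hdrift : drift = (1 / ((K : ℝ) * (S : ℝ))) *
      ∑ i : Fin S, ∑ k : Fin K, ∫ ω, ‖X i (k : ℕ) ω - x‖ ^ 2 ∂μ)
    -- smoothness of the federated loss
    (hFf_smooth : ∀ y z : E, ‖gradient Ff y - gradient Ff z‖ ≤ β * ‖y - z‖)
    -- server learning rate and effective step size bounds
    (hηs1 : 1 ≤ ηs) (hstep : ηt ≤ 1 / (18 * β)) :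
    drift
      ≤ (4 * ηt / (9 * β * ηs ^ 2)) * ‖gradient (fun y => Ff y + Fc y) x‖ ^ 2
        + (2 * ηt ^ 2 / ηs ^ 2) * ((1 / (K : ℝ)) * σ ^ 2 + 4 * σc ^ 2) :=
  owgt_bounded_drift_nonconvex_general μ x K S hK hS η ηs ηt hη hηt Ff Fc hFf_diff hFc_diff β σ σc
    hβ gc hgc_meas hgc_L2 hgc_var g hg_meas hg_L2 X hX0 hXstep hg_condmean hg_condvar drift hdrift
    hFf_smooth hηs1 hstep
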